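/- For every nonnegative integer m, the number of alternating permutations of [2m] with exactly m fixed points equals D_m, the number of derangements of [m]. -/

import Mathlib

/-- `π` is an alternating permutation: `π 1 > π 2 < π 3 > π 4 < ⋯`
(here stated with 0-indexed positions). -/
def IsAlternating {n : ℕ} (π : Equiv.Perm (Fin n)) : Prop :=
  ∀ i : ℕ, ∀ h : i + 1 < n,
    if i % 2 = 0 then π ⟨i + 1, h⟩ < π ⟨i, Nat.lt_of_succ_lt h⟩
    else π ⟨i, Nat.lt_of_succ_lt h⟩ < π ⟨i + 1, h⟩

/-- `π` is a reverse alternating permutation: `π 1 < π 2 > π 3 < π 4 > ⋯`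
(here stated with 0-indexed positions). -/
def IsRevAlternating {n : ℕ} (π : Equiv.Perm (Fin n)) : Prop :=
  ∀ i : ℕ, ∀ h : i + 1 < n,
    if i % 2 = 0 then π ⟨i, Nat.lt_of_succ_lt h⟩ < π ⟨i + 1, h⟩
    else π ⟨i + 1, h⟩ < π ⟨i, Nat.lt_of_succ_lt h⟩

/-- The number of fixed points of a permutation of `Fin n`. -/
def fixedPointCount {n : ℕ} (π : Equiv.Perm (Fin n)) : ℕ :=
  (Finset.univ.filter fun i => π i = i).card

namespace AltCount

open Equiv Finset

variable {m : ℕ}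

def pr (p : Fin (2 * m)) : Fin m := ⟨(p : ℕ) / 2, by have := p.isLt; omega⟩

def P0 (a : Fin m) : Fin (2 * m) := ⟨2 * (a : ℕ), by have := a.isLt; omega⟩
def P1 (a : Fin m) : Fin (2 * m) := ⟨2 * (a : ℕ) + 1, by have := a.isLt; omega⟩

@[simp] lemma P0_val (a : Fin m) : ((P0 a : Fin (2*m)) : ℕ) = 2 * (a : ℕ) := rfl
@[simp] lemma P1_val (a : Fin m) : ((P1 a : Fin (2*m)) : ℕ) = 2 * (a : ℕ) + 1 := rfl
@[simp] lemma pr_val (p : Fin (2 * m)) : ((pr p : Fin m) : ℕ) = (p : ℕ) / 2 := rfl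

@[simp] lemma pr_P0 (a : Fin m) : pr (P0 a) = a := by
  apply Fin.ext; simp

@[simp] lemma pr_P1 (a : Fin m) : pr (P1 a) = a := by
  apply Fin.ext; simp; omega

lemma eq_P0_or_P1 (p : Fin (2 * m)) : p = P0 (pr p) ∨ p = P1 (pr p) := by
  rcases Nat.even_or_odd (p : ℕ) with ⟨k, hk⟩ | ⟨k, hk⟩
  · left; apply Fin.ext; rw [P0_val, pr_val]; omega
  · right; apply Fin.ext; rw [P1_val, pr_val]; omega

def nv (σ : Equiv.Perm (Fin m)) (j : Fin m) : Fin (2 * m) :=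
  if (j : ℕ) < σ j then P0 j else P1 j

@[simp] lemma pr_nv (σ : Equiv.Perm (Fin m)) (j : Fin m) : pr (nv σ j) = j := by
  unfold nv; split <;> simp

def cc (σ : Equiv.Perm (Fin m)) (p : Fin (2 * m)) : Prop :=
  ((p : ℕ) % 2 = 1) ↔ ((pr p : ℕ) < σ (pr p))

instance (σ : Equiv.Perm (Fin m)) (p : Fin (2 * m)) : Decidable (cc σ p) := by
  unfold cc; infer_instance

lemma cc_P0 (σ : Equiv.Perm (Fin m)) (a : Fin m) : cc σ (P0 a) ↔ ¬ ((a : ℕ) < σ a) := by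
  unfold cc; rw [pr_P0, P0_val]; omega

lemma cc_P1 (σ : Equiv.Perm (Fin m)) (a : Fin m) : cc σ (P1 a) ↔ ((a : ℕ) < σ a) := by
  unfold cc; rw [pr_P1, P1_val]; omega

lemma not_cc_nv (σ : Equiv.Perm (Fin m)) (j : Fin m) : ¬ cc σ (nv σ j) := by
  unfold nv
  by_cases h : (j : ℕ) < σ j
  · rw [if_pos h, cc_P0]; omega
  · rw [if_neg h, cc_P1]; omega

lemma eq_nv_of_not_cc {σ : Equiv.Perm (Fin m)} {p : Fin (2 * m)} (h : ¬ cc σ p) :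
    p = nv σ (pr p) := by
  obtain ⟨a, hp⟩ : ∃ a, p = P0 a ∨ p = P1 a := ⟨pr p, eq_P0_or_P1 p⟩
  rcases hp with hp | hp <;> subst hp
  · rw [pr_P0]; rw [cc_P0] at h; unfold nv; rw [if_pos (by omega)]
  · rw [pr_P1]; rw [cc_P1] at h; unfold nv; rw [if_neg h]


/-- The constructed permutation of `Fin (2*m)` from a permutation `σ` of `Fin m`. -/
def F (σ : Equiv.Perm (Fin m)) : Equiv.Perm (Fin (2 * m)) where
  toFun p := if cc σ p then p else nv σ (σ (pr p))
  invFun p := if cc σ p then p else nv σ (σ⁻¹ (pr p))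
  left_inv p := by
    dsimp only
    by_cases h : cc σ p
    · simp [h]
    · rw [if_neg h, if_neg (not_cc_nv σ _), pr_nv, Equiv.Perm.inv_def, Equiv.symm_apply_apply]
      exact (eq_nv_of_not_cc h).symm
  right_inv p := by
    dsimp only
    by_cases h : cc σ p
    · simp [h]
    · rw [if_neg h, if_neg (not_cc_nv σ _), pr_nv, Equiv.Perm.inv_def, Equiv.apply_symm_apply]
      exact (eq_nv_of_not_cc h).symm

lemma F_apply (σ : Equiv.Perm (Fin m)) (p : Fin (2 * m)) :
    F σ p = if cc σ p then p else nv σ (σ (pr p)) := rfl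

lemma F_nv (σ : Equiv.Perm (Fin m)) (j : Fin m) : F σ (nv σ j) = nv σ (σ j) := by
  rw [F_apply, if_neg (not_cc_nv σ j), pr_nv]

lemma F_P0 (σ : Equiv.Perm (Fin m)) (a : Fin m) :
    F σ (P0 a) = if (a : ℕ) < σ a then nv σ (σ a) else P0 a := by
  rw [F_apply, pr_P0]
  by_cases h : (a : ℕ) < σ a
  · rw [if_pos h, if_neg (fun hc => ((cc_P0 σ a).mp hc) h)]
  · rw [if_neg h, if_pos ((cc_P0 σ a).mpr h)]

lemma F_P1 (σ : Equiv.Perm (Fin m)) (a : Fin m) :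
    F σ (P1 a) = if (a : ℕ) < σ a then P1 a else nv σ (σ a) := by
  rw [F_apply, pr_P1]
  by_cases h : (a : ℕ) < σ a
  · rw [if_pos h, if_pos ((cc_P1 σ a).mpr h)]
  · rw [if_neg h, if_neg (fun hc => h ((cc_P1 σ a).mp hc))]

lemma nv_val_bounds (σ : Equiv.Perm (Fin m)) (j : Fin m) :
    2 * (j : ℕ) ≤ (nv σ j : ℕ) ∧ (nv σ j : ℕ) ≤ 2 * (j : ℕ) + 1 := by
  unfold nv; split <;> simp

/-- The constructed permutation is alternating, provided `σ` is a derangement. -/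
lemma F_alternating {σ : Equiv.Perm (Fin m)} (hd : ∀ i, σ i ≠ i) :
    IsAlternating (F σ) := by
  intro i h
  -- helper facts
  have key0 : ∀ a : Fin m, 2 * (a : ℕ) ≤ (F σ (P0 a) : ℕ) := by
    intro a
    rw [F_P0]
    by_cases hb : (a : ℕ) < σ a
    · rw [if_pos hb]
      have := (nv_val_bounds σ (σ a)).1
      omega
    · rw [if_neg hb]; simp
  have key1 : ∀ a : Fin m, (F σ (P1 a) : ℕ) ≤ 2 * (a : ℕ) + 1 := by
    intro a
    rw [F_P1]
    by_cases hb : (a : ℕ) < σ a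
    · rw [if_pos hb]; simp
    · rw [if_neg hb]
      have := (nv_val_bounds σ (σ a)).2
      have hne : ((σ a : Fin m) : ℕ) ≠ (a : ℕ) := fun hc => hd a (Fin.ext hc)
      omega
  have keyd : ∀ a : Fin m, (F σ (P1 a) : ℕ) < (F σ (P0 a) : ℕ) := by
    intro a
    rw [F_P0, F_P1]
    have hne : ((σ a : Fin m) : ℕ) ≠ (a : ℕ) := fun hc => hd a (Fin.ext hc)
    by_cases hb : (a : ℕ) < σ a
    · rw [if_pos hb, if_pos hb]
      have := (nv_val_bounds σ (σ a)).1
      simp only [P1_val]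
      omega
    · rw [if_neg hb, if_neg hb]
      have := (nv_val_bounds σ (σ a)).2
      simp only [P0_val]
      omega
  rcases Nat.even_or_odd i with ⟨a, ha⟩ | ⟨a, ha⟩
  · have ham : a < m := by omega
    rw [if_pos (by omega)]
    have e0 : (⟨i, Nat.lt_of_succ_lt h⟩ : Fin (2 * m)) = P0 ⟨a, ham⟩ := by
      apply Fin.ext; simp [P0]; omega
    have e1 : (⟨i + 1, h⟩ : Fin (2 * m)) = P1 ⟨a, ham⟩ := by
      apply Fin.ext; simp [P1]; omega
    rw [e0, e1, Fin.lt_def]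
    exact keyd _
  · have ham : a + 1 < m := by omega
    rw [if_neg (by omega)]
    have e0 : (⟨i, Nat.lt_of_succ_lt h⟩ : Fin (2 * m)) = P1 ⟨a, by omega⟩ := by
      apply Fin.ext; simp [P1]; omega
    have e1 : (⟨i + 1, h⟩ : Fin (2 * m)) = P0 ⟨a + 1, ham⟩ := by
      apply Fin.ext; simp [P0]; omega
    rw [e0, e1, Fin.lt_def]
    have h1 := key1 ⟨a, by omega⟩
    have h0 := key0 ⟨a + 1, ham⟩
    simp only at h1 h0
    omega

lemma F_fix_iff {σ : Equiv.Perm (Fin m)} (hd : ∀ i, σ i ≠ i) (p : Fin (2 * m)) :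
    F σ p = p ↔ cc σ p := by
  constructor
  · intro hfix
    by_contra h
    rw [F_apply, if_neg h] at hfix
    have : pr (nv σ (σ (pr p))) = pr p := by rw [hfix]
    rw [pr_nv] at this
    exact hd (pr p) this
  · intro h; rw [F_apply, if_pos h]

/-- Fixed position of pair `a` under the construction. -/
def fp (σ : Equiv.Perm (Fin m)) (a : Fin m) : Fin (2 * m) :=
  if (a : ℕ) < σ a then P1 a else P0 a

lemma cc_fp (σ : Equiv.Perm (Fin m)) (a : Fin m) : cc σ (fp σ a) := by
  unfold fp
  by_cases h : (a : ℕ) < σ a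
  · rw [if_pos h, cc_P1]; exact h
  · rw [if_neg h, cc_P0]; exact h

@[simp] lemma pr_fp (σ : Equiv.Perm (Fin m)) (a : Fin m) : pr (fp σ a) = a := by
  unfold fp; split <;> simp

lemma eq_fp_of_cc {σ : Equiv.Perm (Fin m)} {p : Fin (2 * m)} (h : cc σ p) :
    p = fp σ (pr p) := by
  obtain ⟨a, hp⟩ : ∃ a, p = P0 a ∨ p = P1 a := ⟨pr p, eq_P0_or_P1 p⟩
  rcases hp with hp | hp <;> subst hp
  · rw [pr_P0]; rw [cc_P0] at h; unfold fp; rw [if_neg h]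
  · rw [pr_P1]; rw [cc_P1] at h; unfold fp; rw [if_pos h]

lemma count_fixed {σ : Equiv.Perm (Fin m)} (hd : ∀ i, σ i ≠ i) :
    fixedPointCount (F σ) = m := by
  unfold fixedPointCount
  have himg : (Finset.univ.filter fun p => F σ p = p) = Finset.image (fp σ) Finset.univ := by
    ext p
    simp only [Finset.mem_filter, Finset.mem_image, Finset.mem_univ, true_and]
    rw [F_fix_iff hd]
    constructor
    · intro h; exact ⟨pr p, (eq_fp_of_cc h).symm⟩
    · rintro ⟨a, rfl⟩; exact cc_fp σ a
  have hinj : Function.Injective (fp σ) := by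
    intro a b hab
    have := congrArg pr hab
    rwa [pr_fp, pr_fp] at this
  rw [himg, Finset.card_image_of_injective _ hinj, Finset.card_univ, Fintype.card_fin]

lemma exists_sigma {π : Equiv.Perm (Fin (2 * m))} (hA : IsAlternating π)
    (hC : fixedPointCount π = m) :
    ∃ σ : Equiv.Perm (Fin m), (∀ i, σ i ≠ i) ∧ F σ = π := by
  classical
  -- the descent at each pair
  have descent : ∀ a : Fin m, ((π (P1 a)) : ℕ) < ((π (P0 a)) : ℕ) := by
    intro a
    have h2 : 2 * (a : ℕ) + 1 < 2 * m := by have := a.isLt; omega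
    have h3 := hA (2 * (a : ℕ)) h2
    rw [if_pos (by omega), Fin.lt_def] at h3
    exact h3
  have notBoth : ∀ a : Fin m, ¬ (π (P0 a) = P0 a ∧ π (P1 a) = P1 a) := by
    rintro a ⟨h0, h1⟩
    have := descent a
    rw [h0, h1, P0_val, P1_val] at this
    omega
  -- each pair contains a fixed point
  have hfix : ∀ a : Fin m, π (P0 a) = P0 a ∨ π (P1 a) = P1 a := by
    have hinjOn : Set.InjOn (pr (m := m)) ↑(Finset.univ.filter fun p : Fin (2 * m) => π p = p) := by
      intro p hp q hq hpq
      simp only [Finset.coe_filter, Set.mem_setOf_eq, Finset.mem_univ, true_and] at hp hq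
      by_contra hne
      rcases eq_P0_or_P1 p with e | e <;> rcases eq_P0_or_P1 q with e' | e' <;>
          rw [hpq] at e <;>
        first
          | exact hne (e.trans e'.symm)
          | (exact notBoth (pr q) ⟨by rw [← e]; exact hp, by rw [← e']; exact hq⟩)
          | (exact notBoth (pr q) ⟨by rw [← e']; exact hq, by rw [← e]; exact hp⟩)
    have hcard : ((Finset.univ.filter fun p => π p = p).image pr).card = m := by
      rw [Finset.card_image_of_injOn hinjOn]; exact hC
    have huniv : ((Finset.univ.filter fun p => π p = p).image pr) = Finset.univ := by
      apply Finset.eq_univ_of_card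
      rw [hcard, Fintype.card_fin]
    intro a
    have ha : a ∈ ((Finset.univ.filter fun p => π p = p).image pr) := by
      rw [huniv]; exact Finset.mem_univ a
    obtain ⟨p, hp, hpa⟩ := Finset.mem_image.mp ha
    simp only [Finset.mem_filter, Finset.mem_univ, true_and] at hp
    rcases eq_P0_or_P1 p with e | e
    · left; rw [hpa] at e; rw [← e]; exact hp
    · right; rw [hpa] at e; rw [← e]; exact hp
  -- the non-fixed position in each pair
  set np : Fin m → Fin (2 * m) := fun a => if π (P0 a) = P0 a then P1 a else P0 a with hnp
  have pr_np : ∀ a, pr (np a) = a := by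
    intro a; rw [hnp]; dsimp only; split <;> simp
  have np_not_fixed : ∀ a, π (np a) ≠ np a := by
    intro a; rw [hnp]; dsimp only
    split
    · next h => exact fun hc => notBoth a ⟨h, hc⟩
    · next h => exact h
  have val_not_fixed : ∀ a, π (π (np a)) ≠ π (np a) := by
    intro a hc
    exact np_not_fixed a (π.injective hc)
  have nonfixed_eq_np : ∀ (v : Fin (2 * m)), π v ≠ v → v = np (pr v) := by
    intro v hv
    rw [hnp]; dsimp only
    rcases eq_P0_or_P1 v with e | e
    · rw [if_neg (by rw [← e]; exact hv)]; exact e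
    · rw [if_pos ?_]; exact e
      rcases hfix (pr v) with h | h
      · exact h
      · exact absurd (by rw [← e] at h; exact h) hv
  set σ0 : Fin m → Fin m := fun a => pr (π (np a)) with hσ0
  have sig_ne : ∀ a, σ0 a ≠ a := by
    intro a hc
    have h1 := nonfixed_eq_np (π (np a)) (val_not_fixed a)
    rw [show pr (π (np a)) = σ0 a from rfl, hc] at h1
    exact np_not_fixed a h1
  have sig_inj : Function.Injective σ0 := by
    intro a b hab
    have h1 := nonfixed_eq_np (π (np a)) (val_not_fixed a)
    have h2 := nonfixed_eq_np (π (np b)) (val_not_fixed b)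
    rw [show pr (π (np a)) = σ0 a from rfl] at h1
    rw [show pr (π (np b)) = σ0 b from rfl, ← hab] at h2
    have h3 : np a = np b := π.injective (h1.symm ▸ h2.symm ▸ rfl : π (np a) = π (np b))
    have := congrArg pr h3
    rwa [pr_np, pr_np] at this
  have hbij : Function.Bijective σ0 := Finite.injective_iff_bijective.mp sig_inj
  refine ⟨Equiv.ofBijective σ0 hbij, fun i => sig_ne i, ?_⟩
  set σ : Equiv.Perm (Fin m) := Equiv.ofBijective σ0 hbij with hσdef
  have hσ : ∀ a, σ a = σ0 a := fun a => rfl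
  have fixed_P0_iff : ∀ a : Fin m, (π (P0 a) = P0 a ↔ (σ0 a : ℕ) < (a : ℕ)) := by
    intro a
    have hv : ((π (np a)) : ℕ) / 2 = ((σ0 a : Fin m) : ℕ) := rfl
    constructor
    · intro h
      have hnpa : np a = P1 a := by rw [hnp]; dsimp only; rw [if_pos h]
      have hd := descent a
      rw [h, P0_val, ← hnpa] at hd
      omega
    · intro h
      by_contra hne
      have hnpa : np a = P0 a := by rw [hnp]; dsimp only; rw [if_neg hne]
      have h1 : π (P1 a) = P1 a := (hfix a).resolve_left hne
      have hd := descent a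
      rw [h1, P1_val, ← hnpa] at hd
      omega
  have nv_eq_np : ∀ j : Fin m, nv σ j = np j := by
    intro j
    have e : ((σ j : Fin m) : ℕ) = ((σ0 j : Fin m) : ℕ) := rfl
    have hnej : ((σ0 j : Fin m) : ℕ) ≠ (j : ℕ) := fun hc => sig_ne j (Fin.ext hc)
    unfold nv
    by_cases hb : (j : ℕ) < σ j
    · rw [if_pos hb, hnp]; dsimp only
      rw [if_neg fun hc => by have := (fixed_P0_iff j).mp hc; omega]
    · rw [if_neg hb, hnp]; dsimp only
      rw [if_pos ((fixed_P0_iff j).mpr (by omega))]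
  apply Equiv.ext
  intro p
  obtain ⟨a, hp⟩ : ∃ a, p = P0 a ∨ p = P1 a := ⟨pr p, eq_P0_or_P1 p⟩
  have hne' : ((σ0 a : Fin m) : ℕ) ≠ (a : ℕ) := fun hc => sig_ne a (Fin.ext hc)
  have e : ((σ a : Fin m) : ℕ) = ((σ0 a : Fin m) : ℕ) := rfl
  by_cases hfp : π p = p
  · have hcc : cc σ p := by
      rcases hp with rfl | rfl
      · rw [cc_P0]
        have := (fixed_P0_iff a).mp hfp
        omega
      · rw [cc_P1]
        have h0 : ¬ ((σ0 a : ℕ) < (a : ℕ)) :=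
          fun hc => notBoth a ⟨(fixed_P0_iff a).mpr hc, hfp⟩
        omega
    rw [F_apply, if_pos hcc, hfp]
  · have hcc : ¬ cc σ p := by
      rcases hp with rfl | rfl
      · rw [cc_P0]
        have h0 : ¬ ((σ0 a : ℕ) < (a : ℕ)) :=
          fun hc => hfp ((fixed_P0_iff a).mpr hc)
        omega
      · rw [cc_P1]
        have h0 : π (P0 a) = P0 a := (hfix a).resolve_right hfp
        have := (fixed_P0_iff a).mp h0
        omega
    rw [F_apply, if_neg hcc]
    have hpr : pr p = a := by rcases hp with rfl | rfl <;> simp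
    have h1 : p = np a := by rw [← hpr]; exact nonfixed_eq_np p hfp
    have h2 : π p = np (σ0 a) := by
      rw [h1]; exact nonfixed_eq_np (π (np a)) (val_not_fixed a)
    rw [h2, hpr, nv_eq_np, hσ a]

lemma F_inj {σ τ : Equiv.Perm (Fin m)} (hdσ : ∀ i, σ i ≠ i) (hdτ : ∀ i, τ i ≠ i)
    (h : F σ = F τ) : σ = τ := by
  have hiff : ∀ a : Fin m, ((a : ℕ) < σ a ↔ (a : ℕ) < τ a) := by
    intro a
    have h1 : cc σ (P0 a) ↔ cc τ (P0 a) := by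
      rw [← F_fix_iff hdσ, ← F_fix_iff hdτ, h]
    rw [cc_P0, cc_P0] at h1
    omega
  have hnv : nv σ = nv τ := by
    funext j; unfold nv
    by_cases hb : (j : ℕ) < σ j
    · rw [if_pos hb, if_pos ((hiff j).mp hb)]
    · rw [if_neg hb, if_neg fun hc => hb ((hiff j).mpr hc)]
  apply Equiv.ext; intro a
  have h2 : F σ (nv σ a) = F τ (nv τ a) := by rw [hnv, h]
  rw [F_nv, F_nv, hnv] at h2
  have h3 := congrArg pr h2
  rwa [pr_nv, pr_nv] at h3

end AltCount


/-- For every nonnegative integer `m`, the number of alternating permutations of `[2m]` with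
exactly `m` fixed points equals `D_m`, the number of derangements of `[m]`. -/
theorem alternating_even_count (m : ℕ) :
    Nat.card {π : Equiv.Perm (Fin (2 * m)) // IsAlternating π ∧ fixedPointCount π = m} =
      numDerangements m := by
  classical
  have hb : Function.Bijective (fun σd : ↥(derangements (Fin m)) =>
      (⟨AltCount.F σd.1, AltCount.F_alternating σd.2, AltCount.count_fixed σd.2⟩ :
        {π : Equiv.Perm (Fin (2 * m)) // IsAlternating π ∧ fixedPointCount π = m})) := by
    constructor
    · rintro ⟨σ, hσ⟩ ⟨τ, hτ⟩ h
      simp only [Subtype.mk.injEq] at h ⊢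
      exact AltCount.F_inj hσ hτ h
    · rintro ⟨π, hA, hC⟩
      obtain ⟨σ, hd, hF⟩ := AltCount.exists_sigma hA hC
      exact ⟨⟨σ, hd⟩, by simp only [Subtype.mk.injEq]; exact hF⟩
  rw [← Nat.card_eq_of_bijective _ hb, Nat.card_eq_fintype_card,
    card_derangements_fin_eq_numDerangements]
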